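/- arXiv:1206.1113 — 4 statements merged into one kernel-verified Lean document; each statement's English description precedes it below -/
import Mathlib

section
/- Under the phase structure above with i ranging over 1,...,μ phases, the total forest cost satisfies cost(F) = Σ_i cost(F_i) ≤ 4μ · cost(MST(S₁)), i.e., the Nearest-Neighbor-Tree forest is an O(μ)-approximation to the minimum spanning forest. -/
noncomputable def graphCost {V : Type*} {X : Type*} [MetricSpace X] [Fintype V]
    (G : SimpleGraph V) (p : V → X) : ℝ :=
  have : DecidableEq V := Classical.decEq V
  have : DecidableRel G.Adj := Classical.decRel _
  ∑ e ∈ G.edgeFinset, Sym2.lift ⟨fun u v => dist (p u) (p v), fun u v => dist_comm (p u) (p v)⟩ e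


lemma min_lip (x y c : ℝ) : |min x c - min y c| ≤ |x - y| := by
  rcases le_total x c with h1 | h1 <;> rcases le_total y c with h2 | h2 <;>
    rw [abs_sub_le_iff] <;> constructor <;>
    · have hx := le_abs_self (x - y)
      have hy := neg_abs_le (x - y)
      first
        | (rw [min_eq_left h1, min_eq_left h2]; linarith)
        | (rw [min_eq_left h1, min_eq_right h2]; linarith)
        | (rw [min_eq_right h1, min_eq_left h2]; linarith)
        | (rw [min_eq_right h1, min_eq_right h2]; linarith)

lemma edge_sum_bound {X V : Type*} [MetricSpace X] (p : V → X)
    (Q : Finset V) (d : ℝ) (hd : 0 < d)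
    (hsep : ∀ u ∈ Q, ∀ v ∈ Q, u ≠ v → d ≤ dist (p u) (p v)) (a b : V) :
    ∑ q ∈ Q, |min (dist (p a) (p q)) (d / 2) - min (dist (p b) (p q)) (d / 2)| ≤
      dist (p a) (p b) := by
  classical
  set c := d / 2 with hc
  have hc2 : d = c + c := by rw [hc]; ring
  have hzero : ∀ q, c ≤ dist (p a) (p q) → c ≤ dist (p b) (p q) →
      |min (dist (p a) (p q)) c - min (dist (p b) (p q)) c| = 0 := by
    intro q h1 h2
    rw [min_eq_right h1, min_eq_right h2, sub_self, abs_zero]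
  have hterm : ∀ q, |min (dist (p a) (p q)) c - min (dist (p b) (p q)) c| ≤ dist (p a) (p b) := by
    intro q
    calc |min (dist (p a) (p q)) c - min (dist (p b) (p q)) c|
        ≤ |dist (p a) (p q) - dist (p b) (p q)| := min_lip _ _ _
      _ ≤ dist (p a) (p b) := abs_dist_sub_le _ _ _
  by_cases hA : ∃ qa ∈ Q, dist (p a) (p qa) < c
  · obtain ⟨qa, hqaQ, hqa⟩ := hA
    have hAuniq : ∀ q ∈ Q, q ≠ qa → c ≤ dist (p a) (p q) := by
      intro q hq hne
      by_contra hlt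
      push_neg at hlt
      have h1 := hsep q hq qa hqaQ hne
      have h2 := dist_triangle (p q) (p a) (p qa)
      rw [dist_comm (p q) (p a)] at h2
      linarith
    by_cases hB : ∃ qb ∈ Q, dist (p b) (p qb) < c
    · obtain ⟨qb, hqbQ, hqb⟩ := hB
      have hBuniq : ∀ q ∈ Q, q ≠ qb → c ≤ dist (p b) (p q) := by
        intro q hq hne
        by_contra hlt
        push_neg at hlt
        have h1 := hsep q hq qb hqbQ hne
        have h2 := dist_triangle (p q) (p b) (p qb)
        rw [dist_comm (p q) (p b)] at h2
        linarith
      by_cases hab : qa = qb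
      · subst hab
        rw [Finset.sum_eq_single_of_mem qa hqaQ
          (fun q hq hne => hzero q (hAuniq q hq hne) (hBuniq q hq hne))]
        exact hterm qa
      · have hsub2 : ({qa, qb} : Finset V) ⊆ Q := by
          intro x hx
          simp only [Finset.mem_insert, Finset.mem_singleton] at hx
          rcases hx with rfl | rfl <;> assumption
        rw [← Finset.sum_subset hsub2 (by
          intro x hx hnx
          simp only [Finset.mem_insert, Finset.mem_singleton, not_or] at hnx
          exact hzero x (hAuniq x hx hnx.1) (hBuniq x hx hnx.2))]
        rw [Finset.sum_insert (by simp [hab]), Finset.sum_singleton]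
        have hsepab := hsep qa hqaQ qb hqbQ hab
        have h1 : c ≤ dist (p b) (p qa) := by
          linarith [dist_triangle (p qa) (p b) (p qb), dist_comm (p b) (p qa),
            dist_comm (p b) (p qb)]
        have h2 : c ≤ dist (p a) (p qb) := by
          linarith [dist_triangle (p qa) (p a) (p qb), dist_comm (p qa) (p a)]
        rw [min_eq_right h1, min_eq_right h2]
        rw [min_eq_left hqa.le, min_eq_left hqb.le]
        rw [abs_of_nonpos (by linarith), abs_of_nonneg (by linarith)]
        linarith [dist_triangle4 (p qa) (p a) (p b) (p qb), dist_comm (p qa) (p a),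
          dist_comm (p b) (p qb)]
    · push_neg at hB
      rw [Finset.sum_eq_single_of_mem qa hqaQ
        (fun q hq hne => hzero q (hAuniq q hq hne) (hB q hq))]
      exact hterm qa
  · push_neg at hA
    by_cases hB : ∃ qb ∈ Q, dist (p b) (p qb) < c
    · obtain ⟨qb, hqbQ, hqb⟩ := hB
      have hBuniq : ∀ q ∈ Q, q ≠ qb → c ≤ dist (p b) (p q) := by
        intro q hq hne
        by_contra hlt
        push_neg at hlt
        have h1 := hsep q hq qb hqbQ hne
        have h2 := dist_triangle (p q) (p b) (p qb)
        rw [dist_comm (p q) (p b)] at h2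
        linarith
      rw [Finset.sum_eq_single_of_mem qb hqbQ
        (fun q hq hne => hzero q (hA q hq) (hBuniq q hq hne))]
      exact hterm qb
    · push_neg at hB
      rw [Finset.sum_eq_zero (fun q hq => hzero q (hA q hq) (hB q hq))]
      exact dist_nonneg

lemma walk_telescope {V : Type*} {G : SimpleGraph V} (f : V → ℝ) {u v : V} (w : G.Walk u v) :
    |f u - f v| ≤
      (w.edges.map (Sym2.lift ⟨fun x y => |f x - f y|, fun _ _ => abs_sub_comm _ _⟩)).sum := by
  induction w with
  | nil => simp
  | @cons a b c hadj w ih =>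
    simp only [SimpleGraph.Walk.edges_cons, List.map_cons, List.sum_cons, Sym2.lift_mk]
    have := abs_sub_le (f a) (f b) (f c)
    linarith

lemma tour_core {X V : Type*} [MetricSpace X] (G : SimpleGraph V) (hG : G.Connected)
    (p : V → X) (E : Finset (Sym2 V)) (hE : ∀ e, e ∈ E ↔ e ∈ G.edgeSet)
    (Q : Finset V) (d : ℝ) (hd : 0 < d)
    (hsep : ∀ u ∈ Q, ∀ v ∈ Q, u ≠ v → d ≤ dist (p u) (p v)) (hQ : 2 ≤ Q.card) :
    (Q.card : ℝ) * (d / 2) ≤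
      ∑ e ∈ E, Sym2.lift ⟨fun u v => dist (p u) (p v), fun u v => dist_comm (p u) (p v)⟩ e := by
  classical
  set c := d / 2 with hc
  set F : V → Sym2 V → ℝ := fun q =>
    Sym2.lift ⟨fun x y => |min (dist (p x) (p q)) c - min (dist (p y) (p q)) c|,
      fun _ _ => abs_sub_comm _ _⟩ with hF
  have hFnn : ∀ q e, 0 ≤ F q e := by
    intro q e
    induction e using Sym2.ind with
    | _ x y => simp [hF]
  have stepA : ∀ q ∈ Q, c ≤ ∑ e ∈ E, F q e := by
    intro q hq
    obtain ⟨q', hq'Q, hq'⟩ := Finset.exists_mem_ne (s := Q) (by omega) q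
    obtain ⟨w0⟩ := hG.preconnected q q'
    have hpath := w0.bypass_isPath
    have htel := walk_telescope (fun v => min (dist (p v) (p q)) c) w0.bypass
    have hval : |min (dist (p q) (p q)) c - min (dist (p q') (p q)) c| = c := by
      have hs := hsep q' hq'Q q hq hq'
      rw [dist_self, min_eq_left (by linarith), min_eq_right (by linarith), zero_sub, abs_neg,
        abs_of_nonneg (by linarith)]
    have hlist : (w0.bypass.edges.map (F q)).sum = ∑ e ∈ w0.bypass.edges.toFinset, F q e :=
      (List.sum_toFinset _ hpath.edges_nodup).symm
    have hsubE : w0.bypass.edges.toFinset ⊆ E := by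
      intro e he
      rw [List.mem_toFinset] at he
      exact (hE e).mpr (w0.bypass.edges_subset_edgeSet he)
    calc c = |min (dist (p q) (p q)) c - min (dist (p q') (p q)) c| := hval.symm
      _ ≤ (w0.bypass.edges.map (F q)).sum := htel
      _ = ∑ e ∈ w0.bypass.edges.toFinset, F q e := hlist
      _ ≤ ∑ e ∈ E, F q e :=
        Finset.sum_le_sum_of_subset_of_nonneg hsubE (fun e _ _ => hFnn q e)
  have stepB : ∀ e ∈ E,
      ∑ q ∈ Q, F q e ≤
        Sym2.lift ⟨fun u v => dist (p u) (p v), fun u v => dist_comm (p u) (p v)⟩ e := by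
    intro e he
    induction e using Sym2.ind with
    | _ a b =>
      simp only [hF, Sym2.lift_mk]
      exact edge_sum_bound p Q d hd hsep a b
  calc (Q.card : ℝ) * c = ∑ _q ∈ Q, c := by rw [Finset.sum_const, nsmul_eq_mul]
    _ ≤ ∑ q ∈ Q, ∑ e ∈ E, F q e := Finset.sum_le_sum stepA
    _ = ∑ e ∈ E, ∑ q ∈ Q, F q e := Finset.sum_comm
    _ ≤ _ := Finset.sum_le_sum stepB

lemma tour_bound {X V : Type*} [MetricSpace X] [Fintype V] (G : SimpleGraph V) (hG : G.Connected)
    (p : V → X) (Q : Finset V) (d : ℝ) (hd : 0 < d)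
    (hsep : ∀ u ∈ Q, ∀ v ∈ Q, u ≠ v → d ≤ dist (p u) (p v)) (hQ : 2 ≤ Q.card) :
    (Q.card : ℝ) * (d / 2) ≤ graphCost G p := by
  unfold graphCost
  letI : DecidableEq V := Classical.decEq V
  letI : DecidableRel G.Adj := Classical.decRel _
  exact tour_core G hG p G.edgeFinset (fun e => SimpleGraph.mem_edgeFinset) Q d hd hsep hQ

lemma graphCost_nonneg {V X : Type*} [MetricSpace X] [Fintype V]
    (G : SimpleGraph V) (p : V → X) : 0 ≤ graphCost G p := by
  unfold graphCost
  refine Finset.sum_nonneg fun e _ => ?_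
  induction e using Sym2.ind with
  | _ a b => simp only [Sym2.lift_mk]; exact dist_nonneg

open scoped Classical in
/-- Total forest cost over phases `1,…,μ`: the NNT forest costs at most
`4μ · cost(MST(S₁))`. -/
theorem stmt_5 (μ : ℕ) (S : ℕ → Finset (EuclideanSpace ℝ (Fin 2)))
    (hchain : ∀ i, S (i + 1) ⊆ S i) (hS : 1 < (S 1).card)
    (par : ℕ → EuclideanSpace ℝ (Fin 2) → EuclideanSpace ℝ (Fin 2))
    (hpar : ∀ i ∈ Finset.Icc 1 μ, ∀ v ∈ S i \ S (i + 1),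
      par i v ∈ S (i + 1) ∧ dist v (par i v) ≤ (2 : ℝ) ^ i)
    (hsep : ∀ i ∈ Finset.Icc 1 μ, ∀ u ∈ S i, ∀ v ∈ S i, u ≠ v → (2 : ℝ) ^ i / 2 ≤ dist u v)
    (T : SimpleGraph ↥(S 1)) (hT : T.IsTree) :
    ∑ i ∈ Finset.Icc 1 μ, ∑ v ∈ S i \ S (i + 1), dist v (par i v) ≤
      4 * (μ : ℝ) * graphCost T (fun v => (v : EuclideanSpace ℝ (Fin 2))) := by
  set p : ↥(S 1) → EuclideanSpace ℝ (Fin 2) := fun v => (v : EuclideanSpace ℝ (Fin 2)) with hp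
  have hsub : ∀ j, 1 ≤ j → S j ⊆ S 1 := by
    intro j hj
    induction j with
    | zero => omega
    | succ n ih =>
      rcases Nat.lt_or_ge 1 (n + 1) with h | h
      · exact (hchain n).trans (ih (by omega))
      · have : n = 0 := by omega
        subst this
        exact Finset.Subset.refl _
  have hcost0 : 0 ≤ graphCost T p := graphCost_nonneg T p
  have hphase : ∀ i ∈ Finset.Icc 1 μ,
      ∑ v ∈ S i \ S (i + 1), dist v (par i v) ≤ 4 * graphCost T p := by
    intro i hi
    have hi1 : 1 ≤ i := (Finset.mem_Icc.mp hi).1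
    by_cases hD : (S i \ S (i + 1)).Nonempty
    · obtain ⟨v0, hv0⟩ := hD
      obtain ⟨hp0mem, _⟩ := hpar i hi v0 hv0
      have hv0i : v0 ∈ S i := (Finset.mem_sdiff.mp hv0).1
      have hv0ni : v0 ∉ S (i + 1) := (Finset.mem_sdiff.mp hv0).2
      set Q : Finset ↥(S 1) :=
        (S 1).attach.filter (fun v => (v : EuclideanSpace ℝ (Fin 2)) ∈ S i) with hQdef
      have hmemQ : ∀ (x) (hx : x ∈ S i), (⟨x, hsub i hi1 hx⟩ : ↥(S 1)) ∈ Q := by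
        intro x hx
        simp [hQdef, hx]
      have hpmem : par i v0 ∈ S i := hchain i hp0mem
      have hQ2 : 2 ≤ Q.card := by
        have : 1 < Q.card := by
          refine Finset.one_lt_card.mpr
            ⟨⟨v0, hsub i hi1 hv0i⟩, hmemQ v0 hv0i,
             ⟨par i v0, hsub i hi1 hpmem⟩, hmemQ _ hpmem, ?_⟩
          intro h
          apply hv0ni
          have hvv : v0 = par i v0 := congrArg Subtype.val h
          rw [hvv]
          exact hp0mem
        omega
      have hsepQ : ∀ u ∈ Q, ∀ v ∈ Q, u ≠ v → (2:ℝ)^i/2 ≤ dist (p u) (p v) := by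
        intro u hu v hv huv
        exact hsep i hi u (Finset.mem_filter.mp hu).2 v (Finset.mem_filter.mp hv).2
          (fun h => huv (Subtype.ext h))
      have htour := tour_bound T hT.isConnected p Q ((2:ℝ)^i/2) (by positivity) hsepQ hQ2
      have hQcard : Q.card = (S i).card := by
        refine Finset.card_bij' (fun a _ => (a : EuclideanSpace ℝ (Fin 2)))
          (fun x hx => ⟨x, hsub i hi1 hx⟩) ?_ ?_ ?_ ?_
        · intro a ha
          exact (Finset.mem_filter.mp ha).2
        · intro x hx
          exact hmemQ x hx
        · intro a _
          rfl
        · intro x _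
          rfl
      have hcard : ((S i \ S (i+1)).card : ℝ) ≤ (Q.card : ℝ) := by
        rw [hQcard]
        exact_mod_cast Finset.card_le_card Finset.sdiff_subset
      have hsum : ∑ v ∈ S i \ S (i+1), dist v (par i v) ≤ ((S i \ S (i+1)).card : ℝ) * 2^i := by
        have h := Finset.sum_le_card_nsmul (S i \ S (i+1)) (fun v => dist v (par i v)) ((2:ℝ)^i)
          (fun v hv => (hpar i hi v hv).2)
        simpa [nsmul_eq_mul] using h
      have h2i : (0:ℝ) ≤ 2^i := by positivity
      calc ∑ v ∈ S i \ S (i+1), dist v (par i v) ≤ ((S i \ S (i+1)).card : ℝ) * 2^i := hsum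
        _ ≤ (Q.card : ℝ) * 2^i := mul_le_mul_of_nonneg_right hcard h2i
        _ = 4 * ((Q.card : ℝ) * ((2:ℝ)^i/2/2)) := by ring
        _ ≤ 4 * graphCost T p := by linarith
    · rw [Finset.not_nonempty_iff_eq_empty] at hD
      rw [hD, Finset.sum_empty]
      linarith
  calc ∑ i ∈ Finset.Icc 1 μ, ∑ v ∈ S i \ S (i + 1), dist v (par i v)
      ≤ ∑ _i ∈ Finset.Icc 1 μ, 4 * graphCost T p := Finset.sum_le_sum hphase
    _ = (μ : ℝ) * (4 * graphCost T p) := by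
        rw [Finset.sum_const, Nat.card_Icc, nsmul_eq_mul]
        norm_num
    _ = 4 * (μ : ℝ) * graphCost T p := by ring
end

section
/- For finite point sets S ⊆ T in a metric space with |S| ≥ 2, the cost of a minimum spanning tree of S is at most twice the cost of a minimum spanning tree of T. -/
/-!
Walking around a spanning tree of `T` so that each edge is traversed twice visits every point of
`T` at total length at most twice the tree's cost; such a walk is built by growing a vertex set
along tree edges and splicing the detour `u v u` into the walk for each new vertex `v`. Deleting
the points outside `S` only shortens the walk, by the triangle inequality, and its consecutive
pairs then form a connected graph on `S`, a spanning tree of which costs at most the walk's length.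
-/

open SimpleGraph Finset

section

variable {X : Type*} [MetricSpace X]

noncomputable def chainLength : List X → ℝ
  | a :: b :: l => dist a b + chainLength (b :: l)
  | _ => 0

namespace chainLength

@[simp] lemma nil : chainLength ([] : List X) = 0 := rfl

@[simp] lemma singleton (a : X) : chainLength [a] = 0 := rfl

@[simp] lemma cons_cons (a b : X) (l : List X) :
    chainLength (a :: b :: l) = dist a b + chainLength (b :: l) := rfl

lemma le_cons (a : X) : ∀ l : List X, chainLength l ≤ chainLength (a :: l)
  | [] => le_rfl
  | _ :: _ => le_add_of_nonneg_left dist_nonneg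

lemma cons_le_cons_cons (a b : X) : ∀ l : List X,
    chainLength (a :: l) ≤ chainLength (a :: b :: l)
  | [] => by simp
  | c :: l => by simp only [cons_cons]; linarith [dist_triangle a b c]

lemma cons_mono {l₁ l₂ : List X} (h : l₁.Sublist l₂) (a : X) :
    chainLength (a :: l₁) ≤ chainLength (a :: l₂) := by
  induction h generalizing a with
  | slnil => rfl
  | cons b _ ih => exact (ih a).trans (cons_le_cons_cons a b _)
  | cons_cons b _ ih => simpa using ih b

lemma mono {l₁ l₂ : List X} (h : l₁.Sublist l₂) : chainLength l₁ ≤ chainLength l₂ := by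
  induction h with
  | slnil => rfl
  | cons b _ ih => exact ih.trans (le_cons b _)
  | cons_cons b h _ => exact cons_mono h b

lemma insert_detour (a b : X) (r : List X) : ∀ l : List X,
    chainLength (l ++ a :: b :: a :: r) = chainLength (l ++ a :: r) + 2 * dist a b
  | [] => by simp [dist_comm b a]; ring
  | [c] => by simp [dist_comm b a]; ring
  | c :: d :: l => by
    have := insert_detour a b r (d :: l)
    simp only [List.cons_append, cons_cons] at *
    rw [this]
    ring

end chainLength

variable {V : Type*}

noncomputable def edgeDist (p : V → X) : Sym2 V → ℝ :=
  Sym2.lift ⟨fun u v => dist (p u) (p v), fun u v => dist_comm (p u) (p v)⟩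

@[simp] lemma edgeDist_mk (p : V → X) (u v : V) : edgeDist p s(u, v) = dist (p u) (p v) := rfl

lemma edgeDist_nonneg (p : V → X) (e : Sym2 V) : 0 ≤ edgeDist p e := by
  induction e using Sym2.ind with
  | _ u v => exact dist_nonneg

section graphCost

variable [Fintype V] (p : V → X)

lemma graphCost_eq_sum (G : SimpleGraph V) [Fintype G.edgeSet] :
    graphCost G p = ∑ e ∈ G.edgeFinset, edgeDist p e := by
  unfold graphCost
  congr!

lemma graphCost_mono {G H : SimpleGraph V} (h : G ≤ H) : graphCost G p ≤ graphCost H p := by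
  classical
  rw [graphCost_eq_sum, graphCost_eq_sum]
  exact sum_le_sum_of_subset_of_nonneg (edgeFinset_mono h) fun e _ _ => edgeDist_nonneg p e

lemma graphCost_sup_le (G H : SimpleGraph V) :
    graphCost (G ⊔ H) p ≤ graphCost G p + graphCost H p := by
  classical
  rw [graphCost_eq_sum, graphCost_eq_sum, graphCost_eq_sum, edgeFinset_sup, ← sum_union_inter]
  exact le_add_of_nonneg_right (sum_nonneg fun e _ => edgeDist_nonneg p e)

lemma graphCost_edge_le (u v : V) : graphCost (edge u v) p ≤ dist (p u) (p v) := by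
  classical
  rw [graphCost_eq_sum]
  calc ∑ e ∈ (edge u v).edgeFinset, edgeDist p e ≤ ∑ e ∈ {s(u, v)}, edgeDist p e :=
        sum_le_sum_of_subset_of_nonneg (by simp [← coe_subset])
          fun e _ _ => edgeDist_nonneg p e
    _ = dist (p u) (p v) := by simp

@[simp] lemma graphCost_bot : graphCost (⊥ : SimpleGraph V) p = 0 := by
  classical
  simp [graphCost_eq_sum]

end graphCost

def chainGraph : List V → SimpleGraph V
  | a :: b :: l => edge a b ⊔ chainGraph (b :: l)
  | _ => ⊥

lemma chainGraph_reachable_head (a : V) :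
    ∀ (l : List V), ∀ x ∈ a :: l, (chainGraph (a :: l)).Reachable a x
  | [], x, hx => by rw [List.mem_singleton.mp hx]
  | b :: l, x, hx => by
    have hab : (chainGraph (a :: b :: l)).Reachable a b := by
      by_cases h : a = b
      · rw [h]
      · exact Adj.reachable (Or.inl ((edge_adj a b a b).mpr ⟨Or.inl ⟨rfl, rfl⟩, h⟩))
    rcases List.mem_cons.mp hx with rfl | hx
    · rfl
    · exact hab.trans ((chainGraph_reachable_head b l x hx).mono le_sup_right)

lemma graphCost_chainGraph_le [Fintype V] (p : V → X) :
    ∀ l : List V, graphCost (chainGraph l) p ≤ chainLength (l.map p)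
  | [] | [_] => by simp [chainGraph]
  | a :: b :: l => by
    calc graphCost (edge a b ⊔ chainGraph (b :: l)) p
        ≤ graphCost (edge a b) p + graphCost (chainGraph (b :: l)) p := graphCost_sup_le p _ _
      _ ≤ dist (p a) (p b) + chainLength ((b :: l).map p) :=
        add_le_add (graphCost_edge_le p a b) (graphCost_chainGraph_le p (b :: l))

lemma exists_isTree_graphCost_le_chainLength [Fintype V] [Nonempty V] (p : V → X)
    (l : List V) (hl : ∀ v, v ∈ l) :
    ∃ H : SimpleGraph V, H.IsTree ∧ graphCost H p ≤ chainLength (l.map p) := by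
  obtain ⟨a, l, rfl⟩ : ∃ a l', l = a :: l' :=
    List.exists_cons_of_ne_nil (List.ne_nil_of_mem (hl (Classical.arbitrary V)))
  have hconn : (chainGraph (a :: l)).Connected := .mk fun x y =>
    (chainGraph_reachable_head a l x (hl x)).symm.trans (chainGraph_reachable_head a l y (hl y))
  obtain ⟨H, hle, hH⟩ := hconn.exists_isTree_le
  exact ⟨H, hH, (graphCost_mono p hle).trans (graphCost_chainGraph_le p _)⟩

section tour

variable [Fintype V] [DecidableEq V] {G : SimpleGraph V} [DecidableRel G.Adj] (p : V → X)

noncomputable def costWithin (G : SimpleGraph V) [DecidableRel G.Adj] (s : Finset V) : ℝ :=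
  ∑ e ∈ G.edgeFinset ∩ s.sym2, edgeDist p e

lemma costWithin_nonneg (s : Finset V) : 0 ≤ costWithin p G s :=
  sum_nonneg fun e _ => edgeDist_nonneg p e

lemma costWithin_univ : costWithin p G univ = graphCost G p := by
  rw [costWithin, sym2_univ, inter_univ, graphCost_eq_sum]

lemma costWithin_insert_ge {s : Finset V} {u v : V} (hu : u ∈ s) (hv : v ∉ s)
    (huv : G.Adj u v) :
    costWithin p G s + dist (p u) (p v) ≤ costWithin p G (insert v s) := by
  have hnew : s(u, v) ∉ G.edgeFinset ∩ s.sym2 := by simp [hv]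
  have hsub : insert s(u, v) (G.edgeFinset ∩ s.sym2) ⊆ G.edgeFinset ∩ (insert v s).sym2 := by
    exact insert_subset (by simp [huv, hu])
      (inter_subset_inter_left (sym2_mono (subset_insert v s)))
  calc costWithin p G s + dist (p u) (p v)
      = ∑ e ∈ insert s(u, v) (G.edgeFinset ∩ s.sym2), edgeDist p e := by
        rw [sum_insert hnew, add_comm, costWithin, edgeDist_mk]
    _ ≤ costWithin p G (insert v s) :=
        sum_le_sum_of_subset_of_nonneg hsub fun e _ _ => edgeDist_nonneg p e

def IsShortTour (G : SimpleGraph V) [DecidableRel G.Adj] (s : Finset V) (l : List V) : Prop :=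
  (∀ v ∈ s, v ∈ l) ∧ chainLength (l.map p) ≤ 2 * costWithin p G s

lemma IsShortTour.extend {s : Finset V} {l : List V} (hl : IsShortTour p G s l) {u v : V}
    (hu : u ∈ s) (hv : v ∉ s) (huv : G.Adj u v) :
    ∃ l', IsShortTour p G (insert v s) l' := by
  obtain ⟨hcover, hlength⟩ := hl
  obtain ⟨l₁, l₂, rfl⟩ := List.append_of_mem (hcover u hu)
  refine ⟨l₁ ++ u :: v :: u :: l₂, fun w hw => ?_, ?_⟩
  · rcases mem_insert.mp hw with rfl | hw
    · simp
    · have := hcover w hw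
      simp only [List.mem_append, List.mem_cons] at this ⊢
      tauto
  · have hdetour := chainLength.insert_detour (p u) (p v) (l₂.map p) (l₁.map p)
    simp only [List.map_append, List.map_cons] at hlength hdetour ⊢
    linarith [costWithin_insert_ge p hu hv huv]

theorem SimpleGraph.Connected.exists_chainLength_le (hG : G.Connected) :
    ∃ l : List V, (∀ v, v ∈ l) ∧ chainLength (l.map p) ≤ 2 * graphCost G p := by
  classical
  obtain ⟨v₀⟩ := hG.nonempty
  have hbase : IsShortTour p G {v₀} [v₀] :=
    ⟨by simp, by simpa using mul_nonneg zero_le_two (costWithin_nonneg p _)⟩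
  obtain ⟨s, hs, hmax⟩ := exists_max_image {s : Finset V | ∃ l, IsShortTour p G s l} card
    ⟨{v₀}, by simpa using ⟨_, hbase⟩⟩
  obtain ⟨l, hl⟩ : ∃ l, IsShortTour p G s l := by simpa using hs
  suffices s = univ by
    subst this
    exact ⟨l, fun v => hl.1 v (mem_univ v), by simpa [costWithin_univ] using hl.2⟩
  by_contra hne
  obtain ⟨w, hw⟩ : ∃ w, w ∉ s := by simpa [eq_univ_iff_forall] using hne
  obtain ⟨x, hx⟩ : s.Nonempty :=
    card_pos.mp <| by simpa using hmax {v₀} (by simpa using ⟨_, hbase⟩)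
  obtain ⟨walk⟩ := hG.preconnected x w
  obtain ⟨d, -, hd₁, hd₂⟩ := walk.exists_boundary_dart s hx hw
  obtain ⟨l', hl'⟩ := hl.extend p hd₁ hd₂ d.adj
  have := hmax (insert d.snd s) (by simpa using ⟨l', hl'⟩)
  rw [card_insert_of_notMem hd₂] at this
  omega

end tour

end

lemma List.exists_subtype_sublist {α : Type*} (P : α → Prop) [DecidablePred P] (l : List α) :
    ∃ l' : List (Subtype P), (∀ x : Subtype P, x.1 ∈ l → x ∈ l') ∧
      (l'.map Subtype.val).Sublist l := by
  refine ⟨(l.filter P).pmap Subtype.mk fun x hx => of_decide_eq_true (mem_filter.mp hx).2,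
    fun x hx => mem_pmap.mpr ⟨x.1, mem_filter.mpr ⟨hx, decide_eq_true x.2⟩, rfl⟩, ?_⟩
  rw [map_pmap, pmap_eq_map, map_id']
  exact filter_sublist

/-- Steiner-type monotonicity: for finite point sets `S ⊆ T` in a metric space with
`|S| ≥ 2`, the cost of a minimum spanning tree of `S` is at most twice that of `T`:
for every spanning tree of `T` there is a spanning tree of `S` of at most twice the cost. -/
theorem stmt_6 {X : Type*} [MetricSpace X] (S T : Finset X) (hST : S ⊆ T)
    (hS : 2 ≤ S.card)
    (GT : SimpleGraph ↥T) (hGT : GT.IsTree) :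
    ∃ GS : SimpleGraph ↥S, GS.IsTree ∧
      graphCost GS (fun v => (v : X)) ≤ 2 * graphCost GT (fun v => (v : X)) := by
  classical
  have : Nonempty S := (card_pos.mp (by omega)).to_subtype
  obtain ⟨lT, hlT, hcostT⟩ := hGT.connected.exists_chainLength_le (fun v : T => (v : X))
  obtain ⟨lS, hlS, hsub⟩ := (lT.map Subtype.val).exists_subtype_sublist (· ∈ S)
  obtain ⟨GS, hGS, hcostS⟩ := exists_isTree_graphCost_le_chainLength (fun v : S => (v : X)) lS
    fun x => hlS x (List.mem_map_of_mem (hlT ⟨x, hST x.2⟩))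
  exact ⟨GS, hGS, hcostS.trans ((chainLength.mono hsub).trans hcostT)⟩
end

section
/- Let V be a finite point set in ℝ² such that G_r(V) (disk graph with radius r) is connected, and let Dom ⊆ V dominate V within range r. Then the diameter (in hops) of G_{3r}(Dom) is at most the diameter of G_r(V). -/
def diskGraph (S : Finset (EuclideanSpace ℝ (Fin 2))) (ρ : ℝ) : SimpleGraph ↥S where
  Adj u v := u ≠ v ∧ dist (u : EuclideanSpace ℝ (Fin 2)) (v : EuclideanSpace ℝ (Fin 2)) ≤ ρ
  symm := ⟨fun u v ⟨h1, h2⟩ => ⟨h1.symm, by rwa [dist_comm]⟩⟩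
  loopless := ⟨fun u ⟨h, _⟩ => h rfl⟩

/-!
Given a walk `a = x₀, x₁, …, xₙ = b` in `G_r(V)` between two dominators, replace each
interior vertex `xᵢ` by a dominator `uᵢ` with `d(xᵢ, uᵢ) ≤ r`. Consecutive dominators are at
distance at most `r + r + r = 3r`, so `a, u₁, …, uₙ₋₁, b` is a walk of length `n` in `G_{3r}(Dom)`.
This bounds extended diameters; connectivity of `G_r(V)` keeps its extended diameter finite, which
is needed because `diam` is `0` for a disconnected graph.
-/

local notation "ℝ²" => EuclideanSpace ℝ (Fin 2)

namespace diskGraph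

variable {V Dom : Finset ℝ²} {r : ℝ}

lemma edist_le_one_of_dist_le {S : Finset ℝ²} {ρ : ℝ} {u v : S} (h : dist (u : ℝ²) v ≤ ρ) :
    (diskGraph S ρ).edist u v ≤ 1 :=
  SimpleGraph.edist_le_one_iff_adj_or_eq.mpr <| or_iff_not_imp_right.mpr fun hne => ⟨hne, h⟩

lemma edist_le_length_add_one_of_walk (hdom : ∀ v ∈ V, ∃ u ∈ Dom, dist v u ≤ r)
    {x y : V} (p : (diskGraph V r).Walk x y) {u w : Dom}
    (hu : dist (x : ℝ²) u ≤ r) (hw : dist (y : ℝ²) w ≤ r) :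
    (diskGraph Dom (3 * r)).edist u w ≤ p.length + 1 := by
  induction p generalizing u with
  | @nil z =>
    refine (edist_le_one_of_dist_le ?_).trans (by simp)
    linarith [dist_triangle_left (u : ℝ²) w z, dist_nonneg.trans hu]
  | @cons x x' y hadj q ih =>
    obtain ⟨u', hu'Dom, hu'⟩ := hdom x' x'.2
    have hstep : dist (u : ℝ²) u' ≤ 3 * r := by
      linarith [dist_triangle4 (u : ℝ²) x x' u', dist_comm (u : ℝ²) x, hadj.2]
    calc (diskGraph Dom (3 * r)).edist u w
        ≤ (diskGraph Dom (3 * r)).edist u ⟨u', hu'Dom⟩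
          + (diskGraph Dom (3 * r)).edist ⟨u', hu'Dom⟩ w :=
          SimpleGraph.edist_triangle
      _ ≤ 1 + (q.length + 1) := add_le_add (edist_le_one_of_dist_le hstep) (ih hu' hw)
      _ = (SimpleGraph.Walk.cons hadj q).length + 1 := by
          push_cast [SimpleGraph.Walk.length_cons]; ring

lemma edist_le_length_of_walk (hr : 0 ≤ r) (hdom : ∀ v ∈ V, ∃ u ∈ Dom, dist v u ≤ r)
    {x y : V} (p : (diskGraph V r).Walk x y) {a b : Dom}
    (ha : (a : ℝ²) = x) (hb : (b : ℝ²) = y) :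
    (diskGraph Dom (3 * r)).edist a b ≤ p.length := by
  cases p with
  | nil => simp [Subtype.ext (ha.trans hb.symm)]
  | @cons _ x' _ hadj q =>
    have hstart : dist (x' : ℝ²) a ≤ r := by rw [ha, dist_comm]; exact hadj.2
    have hend : dist (y : ℝ²) b ≤ r := by rw [hb, dist_self]; exact hr
    simpa using edist_le_length_add_one_of_walk hdom q hstart hend

lemma edist_le_edist (hr : 0 ≤ r) (hDV : Dom ⊆ V) (hdom : ∀ v ∈ V, ∃ u ∈ Dom, dist v u ≤ r)
    (a b : Dom) :
    (diskGraph Dom (3 * r)).edist a b ≤ (diskGraph V r).edist ⟨a, hDV a.2⟩ ⟨b, hDV b.2⟩ :=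
  le_iInf fun p => edist_le_length_of_walk hr hdom p rfl rfl

lemma ediam_le_ediam (hr : 0 ≤ r) (hDV : Dom ⊆ V) (hdom : ∀ v ∈ V, ∃ u ∈ Dom, dist v u ≤ r) :
    (diskGraph Dom (3 * r)).ediam ≤ (diskGraph V r).ediam :=
  SimpleGraph.ediam_le_of_edist_le fun a b =>
    (edist_le_edist hr hDV hdom a b).trans SimpleGraph.edist_le_ediam

end diskGraph

/-- Diameter transfer: if the disk graph of radius `r` on `V` is connected and `Dom ⊆ V`
dominates `V` within range `r`, then the hop diameter of the disk graph of radius `3r`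
on `Dom` is at most the hop diameter of the disk graph of radius `r` on `V`. -/
theorem stmt_8 (V : Finset (EuclideanSpace ℝ (Fin 2))) (r : ℝ) (hr : 0 < r)
    (hconn : (diskGraph V r).Connected)
    (Dom : Finset (EuclideanSpace ℝ (Fin 2))) (hDV : Dom ⊆ V)
    (hdom : ∀ v ∈ V, ∃ u ∈ Dom, dist v u ≤ r) :
    (diskGraph Dom (3 * r)).diam ≤ (diskGraph V r).diam := by
  have : Nonempty V := hconn.nonempty
  exact ENat.toNat_le_toNat (diskGraph.ediam_le_ediam hr.le hDV hdom)
    (SimpleGraph.connected_iff_ediam_ne_top.mp hconn)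
end

section
/- Let x₁,...,x_k ∈ ℝ² be points pairwise at distance at least r/2, with k ≥ 2. Then the minimum spanning tree of any finite superset V ⊇ {x₁,...,x_k} in ℝ² has cost at least (k−1)·r/4. -/
/-!
With `ρ = r / 4` the points are `2ρ` apart. Induct on the number of edges of an arbitrary finite
graph, proving a rooted statement: if `S` is a finite set of vertices in the component of `v`
whose positions are pairwise `2ρ` apart, then the edges of that component have total length at
least `(#S - 1) ρ + dist v t` for some `t ∈ S`. Delete an edge `vb`. If it is not a bridge, the
component does not change. If it is, `S` splits into the parts on the side of `v` and of `b`, with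
witnesses `tA` and `tB`. As `dist tA tB ≥ 2ρ`, one of them is at distance at least `ρ` from `v`;
this, together with the length of `vb`, pays for the extra `ρ`, and the other one is the new
witness.
-/

open Finset

variable {α X : Type*} [MetricSpace X]

lemma le_max_dist_of_two_mul_le_dist {ρ : ℝ} (x : X) {y z : X} (h : 2 * ρ ≤ dist y z) :
    ρ ≤ max (dist x y) (dist x z) := by
  by_contra! hlt
  rw [max_lt_iff] at hlt
  linarith [dist_triangle_left y z x]

noncomputable def edgeLength (p : α → X) : Sym2 α → ℝ :=
  Sym2.lift ⟨fun u v => dist (p u) (p v), fun u v => dist_comm (p u) (p v)⟩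

@[simp] lemma edgeLength_mk (p : α → X) (u v : α) : edgeLength p s(u, v) = dist (p u) (p v) :=
  rfl

lemma edgeLength_nonneg (p : α → X) (e : Sym2 α) : 0 ≤ edgeLength p e := by
  induction e using Sym2.ind with
  | _ u v => exact dist_nonneg

namespace SimpleGraph

lemma Reachable.deleteEdges_or {G : SimpleGraph α} {u v : α} (a b : α) (h : G.Reachable u v) :
    (G.deleteEdges {s(a, b)}).Reachable u v ∨ (G.deleteEdges {s(a, b)}).Reachable u a ∨
      (G.deleteEdges {s(a, b)}).Reachable u b := by
  obtain ⟨w⟩ := h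
  induction w with
  | nil => exact .inl .rfl
  | @cons u c v huc _ ih =>
    by_cases he : s(u, c) = s(a, b)
    · rcases Sym2.eq_iff.mp he with ⟨rfl, -⟩ | ⟨rfl, -⟩
      · exact .inr (.inl .rfl)
      · exact .inr (.inr .rfl)
    · have hadj : (G.deleteEdges {s(a, b)}).Adj u c := by simp [huc, he]
      exact ih.imp hadj.reachable.trans (Or.imp hadj.reachable.trans hadj.reachable.trans)

end SimpleGraph

section ComponentCost

open scoped Classical

variable [Fintype α] {G : SimpleGraph α}

noncomputable def componentEdgeFinset (G : SimpleGraph α) (v : α) : Finset (Sym2 α) :=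
  {e ∈ G.edgeFinset | ∀ y ∈ e, G.Reachable v y}

@[simp] lemma mem_componentEdgeFinset {v : α} {e : Sym2 α} :
    e ∈ componentEdgeFinset G v ↔ e ∈ G.edgeSet ∧ ∀ y ∈ e, G.Reachable v y := by
  simp [componentEdgeFinset]

lemma componentEdgeFinset_mono {H : SimpleGraph α} (hle : H ≤ G) (v : α) :
    componentEdgeFinset H v ⊆ componentEdgeFinset G v := fun _ he => by
  simp only [mem_componentEdgeFinset] at he ⊢
  exact ⟨SimpleGraph.edgeSet_mono hle he.1, fun y hy => (he.2 y hy).mono hle⟩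

noncomputable def componentCost (G : SimpleGraph α) (p : α → X) (v : α) : ℝ :=
  ∑ e ∈ componentEdgeFinset G v, edgeLength p e

lemma componentCost_nonneg (G : SimpleGraph α) (p : α → X) (v : α) :
    0 ≤ componentCost G p v :=
  sum_nonneg fun e _ => edgeLength_nonneg p e

lemma componentCost_eq_graphCost_of_preconnected (hG : G.Preconnected) (p : α → X) (v : α) :
    componentCost G p v = graphCost G p := by
  rw [componentCost, componentEdgeFinset, filter_true_of_mem fun _ _ y _ => hG v y, graphCost]
  congr

lemma componentCost_mono {H : SimpleGraph α} (hle : H ≤ G) (p : α → X) (v : α) :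
    componentCost H p v ≤ componentCost G p v :=
  sum_le_sum_of_subset_of_nonneg (componentEdgeFinset_mono hle v)
    fun e _ _ => edgeLength_nonneg p e

lemma componentCost_deleteEdges_add_le {a b : α} (hab : G.Adj a b)
    (hbr : ¬ (G.deleteEdges {s(a, b)}).Reachable a b) (p : α → X) :
    componentCost (G.deleteEdges {s(a, b)}) p a + componentCost (G.deleteEdges {s(a, b)}) p b +
      dist (p a) (p b) ≤ componentCost G p a := by
  set H := G.deleteEdges {s(a, b)}
  have hle : H ≤ G := G.deleteEdges_le _
  have hdisj : Disjoint (componentEdgeFinset H a) (componentEdgeFinset H b) := by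
    refine disjoint_left.mpr fun e hea heb => hbr ?_
    have hy := e.out_fst_mem
    exact ((mem_componentEdgeFinset.mp hea).2 _ hy).trans
      ((mem_componentEdgeFinset.mp heb).2 _ hy).symm
  have hab_notMem : s(a, b) ∉ componentEdgeFinset H a ∪ componentEdgeFinset H b := by
    simp [H]
  calc componentCost H p a + componentCost H p b + dist (p a) (p b)
      = ∑ e ∈ insert s(a, b) (componentEdgeFinset H a ∪ componentEdgeFinset H b),
          edgeLength p e := by
        rw [sum_insert hab_notMem, sum_union hdisj, edgeLength_mk, componentCost, componentCost]
        ring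
    _ ≤ componentCost G p a := by
        refine sum_le_sum_of_subset_of_nonneg ?_ fun e _ _ => edgeLength_nonneg p e
        refine insert_subset ?_ (union_subset (componentEdgeFinset_mono hle a) ?_)
        · refine mem_componentEdgeFinset.mpr ⟨hab, fun y hy => ?_⟩
          rcases Sym2.mem_iff.mp hy with rfl | rfl
          exacts [.rfl, hab.reachable]
        · intro e he
          rw [mem_componentEdgeFinset] at he ⊢
          exact ⟨SimpleGraph.edgeSet_mono hle he.1,
            fun y hy => hab.reachable.trans ((he.2 y hy).mono hle)⟩

lemma exists_le_componentCost_of_not_reachable_deleteEdges {ρ : ℝ} {a b : α} {S : Finset α}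
    (p : α → X) (hab : G.Adj a b) (hbr : ¬ (G.deleteEdges {s(a, b)}).Reachable a b)
    (hS : (S : Set α).Pairwise fun s t => 2 * ρ ≤ dist (p s) (p t)) (hne : S.Nonempty)
    (hreach : ∀ s ∈ S, G.Reachable a s)
    (ih : ∀ T ⊆ S, T.Nonempty → ∀ u,
      (∀ t ∈ T, (G.deleteEdges {s(a, b)}).Reachable u t) →
      ∃ t ∈ T, (#T - 1 : ℝ) * ρ + dist (p u) (p t) ≤
        componentCost (G.deleteEdges {s(a, b)}) p u) :
    ∃ t ∈ S, (#S - 1 : ℝ) * ρ + dist (p a) (p t) ≤ componentCost G p a := by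
  set H := G.deleteEdges {s(a, b)}
  have hcost : componentCost H p a + componentCost H p b + dist (p a) (p b) ≤
      componentCost G p a := componentCost_deleteEdges_add_le hab hbr p
  have hA := componentCost_nonneg H p a
  have hB := componentCost_nonneg H p b
  set SA := S.filter (H.Reachable a ·)
  set SB := S.filter (¬ H.Reachable a ·)
  have hcard : #SA + #SB = #S := card_filter_add_card_filter_not _
  have hreachA : ∀ t ∈ SA, H.Reachable a t := fun t ht => (mem_filter.mp ht).2
  have hreachB : ∀ t ∈ SB, H.Reachable b t := fun t ht => by
    rw [mem_filter] at ht
    rcases (hreach t ht.1).symm.deleteEdges_or a b with h | h | h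
    exacts [absurd h.symm ht.2, absurd h.symm ht.2, h.symm]
  rcases SA.eq_empty_or_nonempty with hSA | hSA
  · rw [hSA, card_empty, zero_add] at hcard
    have hSB : SB.Nonempty := card_pos.mp (hcard ▸ hne.card_pos)
    obtain ⟨t, ht, hle⟩ := ih SB (filter_subset _ _) hSB b hreachB
    refine ⟨t, mem_of_mem_filter t ht, ?_⟩
    rw [hcard] at hle
    linarith [dist_triangle (p a) (p b) (p t)]
  rcases SB.eq_empty_or_nonempty with hSB | hSB
  · rw [hSB, card_empty, add_zero] at hcard
    obtain ⟨t, ht, hle⟩ := ih SA (filter_subset _ _) hSA a hreachA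
    refine ⟨t, mem_of_mem_filter t ht, ?_⟩
    rw [hcard] at hle
    linarith [dist_nonneg (x := p a) (y := p b)]
  obtain ⟨tA, htA, hleA⟩ := ih SA (filter_subset _ _) hSA a hreachA
  obtain ⟨tB, htB, hleB⟩ := ih SB (filter_subset _ _) hSB b hreachB
  have hsep : 2 * ρ ≤ dist (p tA) (p tB) :=
    hS (mem_of_mem_filter _ htA) (mem_of_mem_filter _ htB)
      fun h => (mem_filter.mp htB).2 (h ▸ (mem_filter.mp htA).2)
  have hcardρ : (#S : ℝ) * ρ = #SA * ρ + #SB * ρ := by rw [← hcard, Nat.cast_add, add_mul]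
  have htri := dist_triangle (p a) (p b) (p tB)
  rcases le_max_iff.mp (le_max_dist_of_two_mul_le_dist (p a) hsep) with h | h
  · exact ⟨tB, mem_of_mem_filter _ htB, by linarith⟩
  · exact ⟨tA, mem_of_mem_filter _ htA, by linarith⟩

theorem exists_le_componentCost (p : α → X) {ρ : ℝ} (G : SimpleGraph α) {S : Finset α}
    (hS : (S : Set α).Pairwise fun s t => 2 * ρ ≤ dist (p s) (p t)) (hne : S.Nonempty) {v : α}
    (hreach : ∀ s ∈ S, G.Reachable v s) :
    ∃ t ∈ S, (#S - 1 : ℝ) * ρ + dist (p v) (p t) ≤ componentCost G p v := by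
  induction hn : G.edgeSet.ncard using Nat.strong_induction_on generalizing G S v with
  | _ n ih =>
  by_cases hv : ∃ b, G.Adj v b
  · obtain ⟨b, hvb⟩ := hv
    set H := G.deleteEdges {s(v, b)}
    have hlt : H.edgeSet.ncard < n := hn ▸ Set.ncard_lt_ncard (SimpleGraph.edgeSet_strict_mono <|
      (G.deleteEdges_le _).lt_of_ne fun h => by rw [← h] at hvb; simp at hvb) G.edgeSet.toFinite
    by_cases hbr : H.Reachable v b
    · obtain ⟨t, ht, hle⟩ := ih _ hlt H hS hne (fun s hs => by
        rcases (hreach s hs).symm.deleteEdges_or v b with h | h | h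
        exacts [h.symm, h.symm, hbr.trans h.symm]) rfl
      exact ⟨t, ht, hle.trans (componentCost_mono (G.deleteEdges_le _) p v)⟩
    · exact exists_le_componentCost_of_not_reachable_deleteEdges p hvb hbr hS hne hreach
        fun T hT hTne u hu => ih _ hlt H (hS.mono hT) hTne hu rfl
  · have hS1 : S = {v} := by
      refine eq_singleton_iff_nonempty_unique_mem.mpr ⟨hne, fun s hs => ?_⟩
      obtain ⟨w⟩ := hreach s hs
      cases w with
      | nil => rfl
      | cons h _ => exact absurd ⟨_, h⟩ hv
    refine ⟨v, by simp [hS1], ?_⟩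
    simpa [hS1] using componentCost_nonneg G p v

end ComponentCost

theorem stmt_16_general (k : ℕ) (hk : 2 ≤ k) (r : ℝ)
    (x : Fin k → EuclideanSpace ℝ (Fin 2)) (hinj : Function.Injective x)
    (hsep : ∀ i j : Fin k, i ≠ j → r / 2 ≤ dist (x i) (x j))
    (V : Finset (EuclideanSpace ℝ (Fin 2))) (hx : ∀ i, x i ∈ V)
    (G : SimpleGraph ↥V) (hG : G.IsTree) :
    (k - 1 : ℝ) * r / 4 ≤ graphCost G (fun v => (v : EuclideanSpace ℝ (Fin 2))) := by
  classical
  let S : Finset V := univ.image fun i => ⟨x i, hx i⟩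
  have hcard : #S = k :=
    (card_image_of_injective _ fun i j h => hinj (congrArg Subtype.val h)).trans (card_fin k)
  have hS : (S : Set V).Pairwise fun s t => 2 * (r / 4) ≤ dist s.val t.val := by
    simp only [S, coe_image, coe_univ, Set.image_univ]
    rintro - ⟨i, rfl⟩ - ⟨j, rfl⟩ hij
    linarith [hsep i j fun h => hij (h ▸ rfl)]
  have hconn := hG.connected.preconnected
  obtain ⟨t, -, ht⟩ := exists_le_componentCost Subtype.val G hS
    ⟨_, mem_image_of_mem _ (mem_univ ⟨0, by omega⟩)⟩ (v := ⟨x ⟨0, by omega⟩, hx _⟩)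
    fun s _ => hconn _ s
  rw [componentCost_eq_graphCost_of_preconnected hconn, hcard] at ht
  linarith [dist_nonneg (x := x ⟨0, by omega⟩) (y := t)]

/-- If `V` contains `k ≥ 2` points pairwise at distance at least `r/2`, then every
spanning tree of `V` has cost at least `(k-1)·r/4`. -/
theorem stmt_16 (k : ℕ) (hk : 2 ≤ k) (r : ℝ) (hr : 0 < r)
    (x : Fin k → EuclideanSpace ℝ (Fin 2)) (hinj : Function.Injective x)
    (hsep : ∀ i j : Fin k, i ≠ j → r / 2 ≤ dist (x i) (x j))
    (V : Finset (EuclideanSpace ℝ (Fin 2))) (hx : ∀ i, x i ∈ V)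
    (G : SimpleGraph ↥V) (hG : G.IsTree) :
    (k - 1 : ℝ) * r / 4 ≤ graphCost G (fun v => (v : EuclideanSpace ℝ (Fin 2))) :=
  stmt_16_general k hk r x hinj hsep V hx G hG
end
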